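/- Let $w: \mathbb{R}^n \to [0,\infty)$ be locally integrable and let $M$ denote the Hardy--Littlewood maximal operator. Then for every $f \in L^1(Mw\, dx)$ and every $\lambda > 0$, $\int_{\{Mf > \lambda\}} w\, dx \leq \frac{C_n}{\lambda} \int_{\mathbb{R}^n} |f| \, Mw \, dx$, with $C_n$ depending only on the dimension $n$. -/

import Mathlib

open MeasureTheory
open scoped ENNReal

/-- The cube with center `c` and half side length `r`. -/
def centeredCube (n : ℕ) (c : Fin n → ℝ) (r : ℝ) : Set (Fin n → ℝ) :=
  {y | ∀ i, |y i - c i| ≤ r}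

/-- The Hardy–Littlewood maximal operator over cubes,
`Mf(x) = sup_{x ∈ I} |I|⁻¹ ∫_I |f|`. -/
noncomputable def maxOp (n : ℕ) (f : (Fin n → ℝ) → ℝ) (x : Fin n → ℝ) : ℝ≥0∞ :=
  ⨆ (c : Fin n → ℝ) (r : ℝ) (_ : 0 < r) (_ : x ∈ centeredCube n c r),
    (∫⁻ y in centeredCube n c r, ENNReal.ofReal |f y|) / volume (centeredCube n c r)

open Metric Function

/-!
Restricting to cubes of half side at most `R`, every point of `{M_R f > λ}` lies in a cube `Q`
with `λ |Q| < ∫_Q |f|`, and since these radii are bounded the Vitali lemma extracts a disjoint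
subfamily whose fourfold enlargements still cover the level set. Since `Q ⊆ 4Q`, we have
`Mw ≥ w(4Q) / |4Q|` on `Q`, and hence `λ w(4Q) ≤ 4ⁿ ∫_Q |f| Mw`. Summing over the disjoint
cubes and letting `R → ∞` gives the inequality with `C_n = 4ⁿ`.
-/

section Vitali

variable {α : Type*} [PseudoMetricSpace α] [TopologicalSpace.SeparableSpace α]
  [MeasurableSpace α] [OpensMeasurableSpace α]

theorem measure_le_mul_lintegral_of_closedBall_cover (μ ν : Measure α) {E : Set α} {R : ℝ}
    (c : α → α) (r : α → ℝ) (hr : ∀ a ∈ E, 0 < r a) (hrR : ∀ a ∈ E, r a ≤ R)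
    (hmem : ∀ a ∈ E, a ∈ closedBall (c a) (r a)) (K : ℝ≥0∞) (G : α → ℝ≥0∞)
    (hball : ∀ a ∈ E,
      ν (closedBall (c a) (4 * r a)) ≤ K * ∫⁻ y in closedBall (c a) (r a), G y ∂μ) :
    ν E ≤ K * ∫⁻ y, G y ∂μ := by
  obtain ⟨u, huE, hdisj, hcov⟩ :=
    Vitali.exists_disjoint_subfamily_covering_enlargement_closedBall E c r R hrR 4
      (by norm_num)
  have : Countable u := (hdisj.countable_of_nonempty_interior fun a ha =>
    (nonempty_ball.2 (hr a (huE ha))).mono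
      (interior_maximal ball_subset_closedBall isOpen_ball)).to_subtype
  have hdisj' : Pairwise (Disjoint on fun a : u => closedBall (c a) (r a)) :=
    fun a b hab => hdisj a.2 b.2 (Subtype.coe_ne_coe.2 hab)
  calc ν E ≤ ν (⋃ a : u, closedBall (c a) (4 * r a)) := measure_mono fun x hx => by
        obtain ⟨a, ha, hsub⟩ := hcov x hx
        exact Set.mem_iUnion.2 ⟨⟨a, ha⟩, hsub (hmem x hx)⟩
    _ ≤ ∑' a : u, ν (closedBall (c a) (4 * r a)) := measure_iUnion_le _
    _ ≤ ∑' a : u, K * ∫⁻ y in closedBall (c a) (r a), G y ∂μ :=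
        ENNReal.tsum_le_tsum fun a => hball a (huE a.2)
    _ = K * ∫⁻ y in ⋃ a : u, closedBall (c a) (r a), G y ∂μ := by
        rw [ENNReal.tsum_mul_left, lintegral_iUnion (fun _ => measurableSet_closedBall) hdisj']
    _ ≤ K * ∫⁻ y, G y ∂μ := mul_le_mul_right (setLIntegral_le_lintegral _ _) _

end Vitali

section Cubes

variable {n : ℕ}

theorem centeredCube_eq_closedBall (c : Fin n → ℝ) {r : ℝ} (hr : 0 ≤ r) :
    centeredCube n c r = closedBall c r := by
  ext y
  simp only [centeredCube, Set.mem_ofPred_eq, mem_closedBall, dist_pi_le_iff hr, Real.dist_eq]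

theorem volume_closedBall_four_mul (c : Fin n → ℝ) {r : ℝ} (hr : 0 ≤ r) :
    volume (closedBall c (4 * r)) = 4 ^ n * volume (closedBall c r) := by
  rw [Real.volume_pi_closedBall c hr, Real.volume_pi_closedBall c (by positivity),
    Fintype.card_fin, ← ENNReal.ofReal_ofNat, ← ENNReal.ofReal_pow (by norm_num),
    ← ENNReal.ofReal_mul (by positivity), ← mul_pow]
  ring_nf

theorem setLAverage_le_maxOp (g : (Fin n → ℝ) → ℝ) {x c : Fin n → ℝ} {r : ℝ} (hr : 0 < r)
    (hx : x ∈ closedBall c r) :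
    (∫⁻ y in closedBall c r, ENNReal.ofReal |g y|) / volume (closedBall c r) ≤ maxOp n g x := by
  rw [← centeredCube_eq_closedBall c hr.le] at hx ⊢
  exact le_iSup_of_le c <| le_iSup_of_le r <| le_iSup_of_le hr <| le_iSup_of_le hx le_rfl

theorem mul_setLIntegral_closedBall_four_mul_le (w f : (Fin n → ℝ) → ℝ) {c : Fin n → ℝ}
    {r : ℝ} (hr : 0 < r) {t : ℝ≥0∞}
    (ht : t * volume (closedBall c r) ≤ ∫⁻ y in closedBall c r, ENNReal.ofReal |f y|) :
    t * ∫⁻ y in closedBall c (4 * r), ENNReal.ofReal (w y) ≤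
      4 ^ n * ∫⁻ y in closedBall c r, ENNReal.ofReal |f y| * maxOp n w y := by
  set V := volume (closedBall c (4 * r)) with hV
  have hV0 : V ≠ 0 := (measure_closedBall_pos _ _ (by positivity)).ne'
  have hVtop : V ≠ ⊤ := measure_closedBall_lt_top.ne
  set a := (∫⁻ y in closedBall c (4 * r), ENNReal.ofReal |w y|) / V
  have ha : ∀ y ∈ closedBall c r, a ≤ maxOp n w y := fun y hy =>
    setLAverage_le_maxOp w (by positivity) (closedBall_subset_closedBall (by linarith) hy)
  calc t * ∫⁻ y in closedBall c (4 * r), ENNReal.ofReal (w y)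
      ≤ t * (V * a) := by
        rw [ENNReal.mul_div_cancel hV0 hVtop]
        gcongr with y
        exact le_abs_self _
    _ = 4 ^ n * (t * volume (closedBall c r) * a) := by
        rw [hV, volume_closedBall_four_mul c hr.le]; ring
    _ ≤ 4 ^ n * ((∫⁻ y in closedBall c r, ENNReal.ofReal |f y|) * a) := by gcongr
    _ ≤ 4 ^ n * ∫⁻ y in closedBall c r, ENNReal.ofReal |f y| * a := by
        gcongr; exact lintegral_mul_const_le _ _
    _ ≤ 4 ^ n * ∫⁻ y in closedBall c r, ENNReal.ofReal |f y| * maxOp n w y := by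
        gcongr 1
        exact setLIntegral_mono' measurableSet_closedBall fun y hy => by gcongr; exact ha y hy

end Cubes

noncomputable def truncMaxOp (n : ℕ) (R : ℝ) (f : (Fin n → ℝ) → ℝ) (x : Fin n → ℝ) : ℝ≥0∞ :=
  ⨆ (c : Fin n → ℝ) (r : ℝ) (_ : 0 < r) (_ : r ≤ R) (_ : x ∈ centeredCube n c r),
    (∫⁻ y in centeredCube n c r, ENNReal.ofReal |f y|) / volume (centeredCube n c r)

section TruncMaxOp

variable {n : ℕ}

theorem truncMaxOp_mono (f : (Fin n → ℝ) → ℝ) (x : Fin n → ℝ) :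
    Monotone fun R => truncMaxOp n R f x := fun _ _ hRR' =>
  iSup₂_mono fun _ _ => iSup₂_mono' fun hr hrR => ⟨hr, hrR.trans hRR', le_rfl⟩

theorem maxOp_eq_iSup_truncMaxOp (f : (Fin n → ℝ) → ℝ) (x : Fin n → ℝ) :
    maxOp n f x = ⨆ k : ℕ, truncMaxOp n k f x := by
  refine le_antisymm (iSup₂_le fun c r => iSup₂_le fun hr hx => ?_)
    (iSup_le fun k => iSup₂_mono fun _ _ => iSup_mono fun hr => iSup_le fun _ => le_rfl)
  obtain ⟨k, hk⟩ := exists_nat_ge r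
  exact le_iSup_of_le k <| le_iSup₂_of_le c r <| le_iSup₂_of_le hr hk <| le_iSup_of_le hx le_rfl

theorem exists_closedBall_of_lt_truncMaxOp {f : (Fin n → ℝ) → ℝ} {R : ℝ} {t : ℝ≥0∞}
    {x : Fin n → ℝ} (hx : t < truncMaxOp n R f x) :
    ∃ c r, 0 < r ∧ r ≤ R ∧ x ∈ closedBall c r ∧
      t * volume (closedBall c r) < ∫⁻ y in closedBall c r, ENNReal.ofReal |f y| := by
  simp only [truncMaxOp, lt_iSup_iff] at hx
  obtain ⟨c, r, hr, hrR, hxc, hlt⟩ := hx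
  rw [centeredCube_eq_closedBall c hr.le] at hxc hlt
  refine ⟨c, r, hr, hrR, hxc, ?_⟩
  rwa [← ENNReal.lt_div_iff_mul_lt (Or.inl (measure_closedBall_pos _ _ hr).ne')
    (Or.inl measure_closedBall_lt_top.ne)]

theorem withDensity_lt_truncMaxOp_le (w f : (Fin n → ℝ) → ℝ) (R : ℝ) {t : ℝ≥0∞}
    (ht0 : t ≠ 0) (ht : t ≠ ⊤) :
    volume.withDensity (fun x => ENNReal.ofReal (w x)) {x | t < truncMaxOp n R f x} ≤
      4 ^ n / t * ∫⁻ x, ENNReal.ofReal |f x| * maxOp n w x := by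
  choose! c r hr hrR hxc hlt using
    fun x (hx : t < truncMaxOp n R f x) => exists_closedBall_of_lt_truncMaxOp hx
  refine measure_le_mul_lintegral_of_closedBall_cover _ _ c r hr hrR hxc _ _ fun x hx => ?_
  rw [withDensity_apply _ measurableSet_closedBall, ← ENNReal.mul_div_right_comm,
    ENNReal.le_div_iff_mul_le (Or.inl ht0) (Or.inl ht), mul_comm]
  exact mul_setLIntegral_closedBall_four_mul_le w f (hr x hx) (hlt x hx).le

end TruncMaxOp

/-- The Fefferman–Stein weighted weak type (1,1) inequality for the
Hardy–Littlewood maximal operator. -/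
theorem stmt_7 (n : ℕ) :
    ∃ C : ℝ, 0 < C ∧
      ∀ (w : (Fin n → ℝ) → ℝ), (∀ x, 0 ≤ w x) → LocallyIntegrable w →
        ∀ (f : (Fin n → ℝ) → ℝ), Measurable f →
          (∫⁻ x, ENNReal.ofReal |f x| * maxOp n w x) < ⊤ →
          ∀ (lam : ℝ), 0 < lam →
            (∫⁻ x in {x | ENNReal.ofReal lam < maxOp n f x}, ENNReal.ofReal (w x)) ≤
              ENNReal.ofReal (C / lam) * ∫⁻ x, ENNReal.ofReal |f x| * maxOp n w x := by
  refine ⟨4 ^ n, by positivity, fun w _ _ f _ _ lam hlam => ?_⟩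
  set t := ENNReal.ofReal lam
  have hlevel : {x | t < maxOp n f x} = ⋃ k : ℕ, {x | t < truncMaxOp n k f x} := by
    ext x
    simp only [Set.mem_iUnion, Set.mem_ofPred_eq, maxOp_eq_iSup_truncMaxOp, lt_iSup_iff]
  have hmono : Monotone fun k : ℕ => {x | t < truncMaxOp n k f x} := fun k l hkl x hx =>
    hx.trans_le (truncMaxOp_mono f x (Nat.cast_le.2 hkl))
  rw [← withDensity_apply', hlevel, hmono.measure_iUnion, ENNReal.ofReal_div_of_pos hlam,
    ENNReal.ofReal_pow (by norm_num), ENNReal.ofReal_ofNat]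
  exact iSup_le fun k =>
    withDensity_lt_truncMaxOp_le w f k (ENNReal.ofReal_pos.2 hlam).ne' ENNReal.ofReal_ne_top
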